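/- arXiv:2202.04721 — 7 statements merged into one kernel-verified Lean document; each statement's English description precedes it below -/
import Mathlib

section
/- Let K ⊂ R^n be convex and compact with 0 ∈ K and rB ⊆ K for some r > 0, where B is the closed Euclidean unit ball. Fix δ ∈ (0,1) and δ' ∈ [0, r). Let y ∈ R^n with y/(1 - δ'/r) ∉ K, and let g ∈ R^n be a separating hyperplane, i.e., (y/(1-δ'/r) - x)ᵀ g > 0 for all x ∈ K. Then for every z ∈ (1-δ)(1-δ'/r)K, it holds that (y - z)ᵀ g > δ(r - δ')‖g‖. -/
/-!
Put `c = 1 - δ'/r > 0` and write `z = (1 - δ) c x` with `x ∈ K`. The point `u = r g / ‖g‖` lies in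
`rB ⊆ K`, so by convexity `(1 - δ) x + δ u ∈ K`, and the separation hypothesis at this point reads
`(1 - δ)⟪x, g⟫ + δ r ‖g‖ < ⟪y / c, g⟫`. Multiplying by `c` and using `r c = r - δ'` gives the claim.
-/

open Metric Set
open scoped Pointwise
open scoped RealInnerProductSpace

section

variable {E : Type*} [NormedAddCommGroup E] [InnerProductSpace ℝ E]

theorem exists_mem_closedBall_inner_eq (g : E) {r : ℝ} (hr : 0 ≤ r) :
    ∃ u ∈ closedBall (0 : E) r, ⟪u, g⟫ = r * ‖g‖ := by
  refine ⟨(r * ‖g‖⁻¹) • g, ?_, ?_⟩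
  · rw [mem_closedBall_zero_iff, norm_smul, Real.norm_eq_abs, abs_of_nonneg (by positivity),
      mul_assoc]
    exact mul_le_of_le_one_right hr (inv_mul_le_one_of_le₀ le_rfl (norm_nonneg g))
  · rw [real_inner_smul_left, real_inner_self_eq_norm_sq]
    rcases eq_or_ne ‖g‖ 0 with hg | hg
    · simp [hg]
    · field_simp

theorem Convex.add_mul_norm_lt_inner_of_forall_inner_sub_pos {K : Set E} (hK : Convex ℝ K)
    {r : ℝ} (hr : 0 ≤ r) (hball : closedBall (0 : E) r ⊆ K) {p g x : E} (hx : x ∈ K)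
    {t : ℝ} (ht₀ : 0 ≤ t) (ht₁ : t ≤ 1) (hsep : ∀ w ∈ K, 0 < ⟪p - w, g⟫) :
    (1 - t) * ⟪x, g⟫ + t * (r * ‖g‖) < ⟪p, g⟫ := by
  obtain ⟨u, hu, hug⟩ := exists_mem_closedBall_inner_eq g hr
  have hmem : (1 - t) • x + t • u ∈ K := hK hx (hball hu) (by linarith) ht₀ (by ring)
  have := hsep _ hmem
  rwa [inner_sub_left, inner_add_left, real_inner_smul_left, real_inner_smul_left, hug,
    sub_pos] at this

end

theorem stmt1_general {n : ℕ} (K : Set (EuclideanSpace ℝ (Fin n))) (hK : Convex ℝ K)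
    (r : ℝ) (hr : 0 < r)
    (hball : closedBall (0 : EuclideanSpace ℝ (Fin n)) r ⊆ K)
    (δ δ' : ℝ) (hδ : δ ∈ Set.Ioo (0 : ℝ) 1) (hδ' : δ' ∈ Set.Ico (0 : ℝ) r)
    (y g : EuclideanSpace ℝ (Fin n))
    (hsep : ∀ x ∈ K, 0 < ⟪(1 - δ' / r)⁻¹ • y - x, g⟫) :
    ∀ z ∈ ((1 - δ) * (1 - δ' / r)) • K, δ * (r - δ') * ‖g‖ < ⟪y - z, g⟫ := by
  rintro _ ⟨x, hx, rfl⟩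
  set c := 1 - δ' / r
  have hc : 0 < c := sub_pos.mpr ((div_lt_one hr).mpr hδ'.2)
  have hrc : r - δ' = r * c := by simp only [c]; field_simp
  have hlt := hK.add_mul_norm_lt_inner_of_forall_inner_sub_pos hr.le hball hx hδ.1.le hδ.2.le hsep
  rw [real_inner_smul_left] at hlt
  have hyc : ⟪y, g⟫ = c * (c⁻¹ * ⟪y, g⟫) := by field_simp
  rw [inner_sub_left, real_inner_smul_left, hrc, hyc]
  linear_combination mul_lt_mul_of_pos_left hlt hc

theorem stmt1 {n : ℕ} (K : Set (EuclideanSpace ℝ (Fin n))) (hK : Convex ℝ K)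
    (hKc : IsCompact K) (h0 : (0 : EuclideanSpace ℝ (Fin n)) ∈ K)
    (r : ℝ) (hr : 0 < r)
    (hball : closedBall (0 : EuclideanSpace ℝ (Fin n)) r ⊆ K)
    (δ δ' : ℝ) (hδ : δ ∈ Set.Ioo (0 : ℝ) 1) (hδ' : δ' ∈ Set.Ico (0 : ℝ) r)
    (y g : EuclideanSpace ℝ (Fin n))
    (hy : (1 - δ' / r)⁻¹ • y ∉ K)
    (hsep : ∀ x ∈ K, 0 < ⟪(1 - δ' / r)⁻¹ • y - x, g⟫) :
    ∀ z ∈ ((1 - δ) * (1 - δ' / r)) • K, δ * (r - δ') * ‖g‖ < ⟪y - z, g⟫ :=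
  stmt1_general K hK r hr hball δ δ' hδ hδ' y g hsep
end

section
/- Let K ⊂ R^n be convex and compact, y ∈ R^n, and x_i ∈ K. Let v_i ∈ argmin_{x ∈ K} (x_i - y)ᵀ x. Suppose (x_i - y)ᵀ(x_i - v_i) ≤ ε and ‖x_i - y‖² > 3ε for some ε > 0. Then for all z ∈ K it holds that (y - z)ᵀ(y - x_i) > 2ε. -/
open scoped RealInnerProductSpace

theorem sq_norm_sub_sub_le_inner_of_dual_gap_le {E : Type*} [NormedAddCommGroup E]
    [InnerProductSpace ℝ E] {x y v z : E} {ε : ℝ}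
    (hmin : ⟪x - y, v⟫ ≤ ⟪x - y, z⟫) (hgap : ⟪x - y, x - v⟫ ≤ ε) :
    ‖x - y‖ ^ 2 - ε ≤ ⟪y - z, y - x⟫ :=
  calc ‖x - y‖ ^ 2 - ε ≤ ⟪x - y, x - y⟫ - ⟪x - y, x - v⟫ := by
        rw [real_inner_self_eq_norm_sq]; linarith
    _ = ⟪x - y, v⟫ - ⟪x - y, y⟫ := by simp only [inner_sub_right]; ring
    _ ≤ ⟪x - y, z⟫ - ⟪x - y, y⟫ := by linarith
    _ = ⟪y - z, y - x⟫ := by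
        simp only [inner_sub_left, inner_sub_right, real_inner_comm x z, real_inner_comm y z,
          real_inner_comm x y]
        ring

theorem stmt7_general {n : ℕ} (K : Set (EuclideanSpace ℝ (Fin n)))
    (y xi vi : EuclideanSpace ℝ (Fin n))
    (hargmin : ∀ x ∈ K, ⟪xi - y, vi⟫ ≤ ⟪xi - y, x⟫)
    (ε : ℝ)
    (hgap : ⟪xi - y, xi - vi⟫ ≤ ε)
    (hfar : 3 * ε < ‖xi - y‖ ^ 2) :
    ∀ z ∈ K, 2 * ε < ⟪y - z, y - xi⟫ := fun z hz => by
  linarith [sq_norm_sub_sub_le_inner_of_dual_gap_le (hargmin z hz) hgap]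

theorem stmt7 {n : ℕ} (K : Set (EuclideanSpace ℝ (Fin n))) (hK : Convex ℝ K)
    (hKc : IsCompact K) (y xi vi : EuclideanSpace ℝ (Fin n))
    (hxi : xi ∈ K) (hvi : vi ∈ K)
    (hargmin : ∀ x ∈ K, ⟪xi - y, vi⟫ ≤ ⟪xi - y, x⟫)
    (ε : ℝ) (hε : 0 < ε)
    (hgap : ⟪xi - y, xi - vi⟫ ≤ ε)
    (hfar : 3 * ε < ‖xi - y‖ ^ 2) :
    ∀ z ∈ K, 2 * ε < ⟪y - z, y - xi⟫ :=
  stmt7_general K y xi vi hargmin ε hgap hfar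
end

section
/- Consider online gradient descent without feasibility: points ỹ_1, ..., ỹ_T with updates y_{t+1} = ỹ_t - η ∇_t where ∇_t ∈ ∂f_t(ỹ_t), and ỹ_{t+1} is any point satisfying ‖ỹ_{t+1} - z‖² ≤ ‖y_{t+1} - z‖² for all z ∈ K (an infeasible projection). If all f_t are convex, then for every subinterval [s,e] ⊆ [T] and every x ∈ K: Σ_{t=s}^{e} (f_t(ỹ_t) - f_t(x)) ≤ ‖ỹ_s - x‖²/(2η) + (η/2) Σ_{t=s}^{e} ‖∇_t‖². -/
open Metric Set Finset
open scoped RealInnerProductSpace BigOperators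

/-!
The squared distance to the comparator `x`, scaled by `1 / (2η)`, is a potential. Since the
infeasible projection `ỹ_{t+1}` is no farther from `x ∈ K` than the gradient step
`ỹ_t - η ∇_t`, expanding the square bounds the linearised regret `⟪∇_t, ỹ_t - x⟫`, hence by
the subgradient inequality `f_t(ỹ_t) - f_t(x)`, by the drop of the potential plus
`η ‖∇_t‖² / 2`. Summing over `[s, e]` telescopes, and the final potential is nonnegative.
-/

section GradientStep

variable {E : Type*} [NormedAddCommGroup E] [InnerProductSpace ℝ E]

theorem norm_sub_smul_sub_sq (y g x : E) (η : ℝ) :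
    ‖(y - η • g) - x‖ ^ 2 = ‖y - x‖ ^ 2 + 2 * η * ⟪g, x - y⟫ + η ^ 2 * ‖g‖ ^ 2 := by
  rw [show (y - η • g) - x = -((x - y) + η • g) by abel, norm_neg, norm_add_sq_real,
    norm_sub_rev, inner_smul_right, real_inner_comm, norm_smul, mul_pow, Real.norm_eq_abs, sq_abs]
  ring

theorem potential_sub_le_inner_of_norm_sub_sq_le {η : ℝ} (hη : 0 < η) {g y y' x : E}
    (h : ‖y' - x‖ ^ 2 ≤ ‖(y - η • g) - x‖ ^ 2) :
    ‖y' - x‖ ^ 2 / (2 * η) - ‖y - x‖ ^ 2 / (2 * η) ≤ ⟪g, x - y⟫ + η / 2 * ‖g‖ ^ 2 := by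
  rw [norm_sub_smul_sub_sq] at h
  rw [div_sub_div_same, div_le_iff₀ (by positivity)]
  linarith

end GradientStep

theorem stmt11_general {n : ℕ} (K : Set (EuclideanSpace ℝ (Fin n)))
    (T : ℕ) (η : ℝ) (hη : 0 < η)
    (f : ℕ → EuclideanSpace ℝ (Fin n) → ℝ)
    (ytil grad : ℕ → EuclideanSpace ℝ (Fin n))
    (hsubgrad : ∀ t, ∀ x, f t (ytil t) + ⟪grad t, x - ytil t⟫ ≤ f t x)
    (hproj : ∀ t, ∀ z ∈ K,
      ‖ytil (t + 1) - z‖ ^ 2 ≤ ‖(ytil t - η • grad t) - z‖ ^ 2) :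
    ∀ s e : ℕ, s ≤ e → e ≤ T → ∀ x ∈ K,
      ∑ t ∈ Finset.Icc s e, (f t (ytil t) - f t x) ≤
        ‖ytil s - x‖ ^ 2 / (2 * η) +
          (η / 2) * ∑ t ∈ Finset.Icc s e, ‖grad t‖ ^ 2 := by
  intro s e hse _ x hx
  set φ : ℕ → ℝ := fun t ↦ ‖ytil t - x‖ ^ 2 / (2 * η)
  have step (t : ℕ) : f t (ytil t) - f t x + (φ (t + 1) - φ t) ≤ η / 2 * ‖grad t‖ ^ 2 := by
    have := potential_sub_le_inner_of_norm_sub_sq_le hη (hproj t x hx)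
    linarith [hsubgrad t x]
  have hsum := Finset.sum_le_sum fun t (_ : t ∈ Finset.Icc s e) ↦ step t
  rw [Finset.sum_add_distrib, Finset.sum_Icc_sub hse, ← Finset.mul_sum] at hsum
  have : 0 ≤ φ (e + 1) := by positivity
  linarith

theorem stmt11 {n : ℕ} (K : Set (EuclideanSpace ℝ (Fin n))) (hK : Convex ℝ K)
    (hKc : IsCompact K) (T : ℕ) (η : ℝ) (hη : 0 < η)
    (f : ℕ → EuclideanSpace ℝ (Fin n) → ℝ)
    (ytil grad : ℕ → EuclideanSpace ℝ (Fin n))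
    (hconv : ∀ t, Convex ℝ (Set.univ : Set (EuclideanSpace ℝ (Fin n))) ∧
      ConvexOn ℝ Set.univ (f t))
    (hsubgrad : ∀ t, ∀ x, f t (ytil t) + ⟪grad t, x - ytil t⟫ ≤ f t x)
    (hproj : ∀ t, ∀ z ∈ K,
      ‖ytil (t + 1) - z‖ ^ 2 ≤ ‖(ytil t - η • grad t) - z‖ ^ 2) :
    ∀ s e : ℕ, s ≤ e → e ≤ T → ∀ x ∈ K,
      ∑ t ∈ Finset.Icc s e, (f t (ytil t) - f t x) ≤
        ‖ytil s - x‖ ^ 2 / (2 * η) +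
          (η / 2) * ∑ t ∈ Finset.Icc s e, ‖grad t‖ ^ 2 :=
  stmt11_general K T η hη f ytil grad hsubgrad hproj
end

section
/- Consider online gradient descent without feasibility with α-strongly convex losses f_t and step sizes η_t = 1/(αt): updates y_{t+1} = ỹ_t - η_t ∇_t with ∇_t ∈ ∂f_t(ỹ_t) and ỹ_{t+1} an infeasible projection of y_{t+1} onto K. Then for every x ∈ K: Σ_{t=1}^{T} (f_t(ỹ_t) - f_t(x)) ≤ Σ_{t=1}^{T} ‖∇_t‖²/(2αt). -/
open Finset
open scoped RealInnerProductSpace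

/-!
Expanding the square in the projection inequality gives, with `c = α t`,
`⟪∇ₜ, ỹₜ - x⟫ ≤ c/2 (‖ỹₜ - x‖² - ‖ỹₜ₊₁ - x‖²) + ‖∇ₜ‖²/(2c)`. Strong convexity subtracts
`α/2 ‖ỹₜ - x‖²`, so the round-`t` regret is at most `Φ t - Φ (t + 1) + ‖∇ₜ‖²/(2αt)` for the
potential `Φ t = α (t - 1)/2 ‖ỹₜ - x‖²`; the sum telescopes, `Φ 1 = 0` and `Φ (T + 1) ≥ 0`.
-/

section InnerProductSpace

variable {E : Type*} [NormedAddCommGroup E] [InnerProductSpace ℝ E]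

lemma inner_le_of_norm_sub_sq_le_norm_step_sub_sq {y y' g x : E} {c : ℝ} (hc : 0 < c)
    (hstep : ‖y' - x‖ ^ 2 ≤ ‖(y - (1 / c) • g) - x‖ ^ 2) :
    ⟪g, y - x⟫ ≤ c / 2 * (‖y - x‖ ^ 2 - ‖y' - x‖ ^ 2) + ‖g‖ ^ 2 / (2 * c) := by
  have hexpand : ‖(y - (1 / c) • g) - x‖ ^ 2
      = ‖y - x‖ ^ 2 - 2 / c * ⟪g, y - x⟫ + ‖g‖ ^ 2 / c ^ 2 := by
    rw [sub_right_comm, norm_sub_sq_real, real_inner_smul_right, real_inner_comm, norm_smul,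
      mul_pow, Real.norm_eq_abs, sq_abs]
    ring
  have hc' : c ≠ 0 := hc.ne'
  calc ⟪g, y - x⟫ = c / 2 * (‖y - x‖ ^ 2 - (‖y - x‖ ^ 2 - 2 / c * ⟪g, y - x⟫ + ‖g‖ ^ 2 / c ^ 2))
        + ‖g‖ ^ 2 / (2 * c) := by field_simp; ring
    _ ≤ c / 2 * (‖y - x‖ ^ 2 - ‖y' - x‖ ^ 2) + ‖g‖ ^ 2 / (2 * c) := by
      gcongr
      exact hexpand ▸ hstep

lemma sub_le_of_strongly_convex_of_norm_step_sub_sq_le {f : E → ℝ} {y y' g x : E} {α c : ℝ}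
    (hc : 0 < c) (hsc : f y - f x ≤ ⟪g, y - x⟫ - α / 2 * ‖y - x‖ ^ 2)
    (hstep : ‖y' - x‖ ^ 2 ≤ ‖(y - (1 / c) • g) - x‖ ^ 2) :
    f y - f x ≤ (c - α) / 2 * ‖y - x‖ ^ 2 - c / 2 * ‖y' - x‖ ^ 2 + ‖g‖ ^ 2 / (2 * c) := by
  linarith [inner_le_of_norm_sub_sq_le_norm_step_sub_sq hc hstep]

end InnerProductSpace

lemma sum_Icc_le_sub_add_sum_of_le_sub_add {a b Φ : ℕ → ℝ} {T : ℕ}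
    (h : ∀ t ∈ Icc 1 T, a t ≤ Φ t - Φ (t + 1) + b t) :
    ∑ t ∈ Icc 1 T, a t ≤ Φ 1 - Φ (T + 1) + ∑ t ∈ Icc 1 T, b t := by
  have htelescope : ∑ t ∈ Icc 1 T, (Φ t - Φ (t + 1)) = Φ 1 - Φ (T + 1) := by
    rw [← Ico_add_one_right_eq_Icc, ← neg_sub (Φ (T + 1)), ← sum_Ico_sub Φ (Nat.le_add_left 1 T),
      ← sum_neg_distrib]
    simp only [neg_sub]
  calc ∑ t ∈ Icc 1 T, a t ≤ ∑ t ∈ Icc 1 T, (Φ t - Φ (t + 1) + b t) := sum_le_sum h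
    _ = Φ 1 - Φ (T + 1) + ∑ t ∈ Icc 1 T, b t := by rw [sum_add_distrib, htelescope]

theorem stmt12_general {n : ℕ} (K : Set (EuclideanSpace ℝ (Fin n))) (T : ℕ) (α : ℝ) (hα : 0 < α)
    (f : ℕ → EuclideanSpace ℝ (Fin n) → ℝ)
    (ytil grad : ℕ → EuclideanSpace ℝ (Fin n))
    (hsc : ∀ t ∈ Finset.Icc 1 T, ∀ x,
      f t (ytil t) - f t x ≤ ⟪grad t, ytil t - x⟫ - (α / 2) * ‖ytil t - x‖ ^ 2)
    (hproj : ∀ t ∈ Finset.Icc 1 T, ∀ z ∈ K,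
      ‖ytil (t + 1) - z‖ ^ 2 ≤ ‖(ytil t - (1 / (α * t)) • grad t) - z‖ ^ 2) :
    ∀ x ∈ K,
      ∑ t ∈ Finset.Icc 1 T, (f t (ytil t) - f t x) ≤
        ∑ t ∈ Finset.Icc 1 T, ‖grad t‖ ^ 2 / (2 * α * t) := by
  intro x hx
  set Φ : ℕ → ℝ := fun t => α * ((t : ℝ) - 1) / 2 * ‖ytil t - x‖ ^ 2 with hΦ
  have hround : ∀ t ∈ Icc 1 T,
      f t (ytil t) - f t x ≤ Φ t - Φ (t + 1) + ‖grad t‖ ^ 2 / (2 * α * t) := by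
    intro t ht
    have ht1 : (1 : ℝ) ≤ t := by exact_mod_cast (mem_Icc.mp ht).1
    have h := sub_le_of_strongly_convex_of_norm_step_sub_sq_le (c := α * t) (by positivity)
      (hsc t ht x) (hproj t ht x hx)
    simp only [hΦ, Nat.cast_add, Nat.cast_one]
    convert h using 1; ring
  have hΦ_one : Φ 1 = 0 := by simp [hΦ]
  have hΦ_nonneg : 0 ≤ Φ (T + 1) := by
    simp only [hΦ, Nat.cast_add, Nat.cast_one, add_sub_cancel_right]
    positivity
  linarith [sum_Icc_le_sub_add_sum_of_le_sub_add hround]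

theorem stmt12 {n : ℕ} (K : Set (EuclideanSpace ℝ (Fin n))) (hK : Convex ℝ K)
    (hKc : IsCompact K) (T : ℕ) (α : ℝ) (hα : 0 < α)
    (f : ℕ → EuclideanSpace ℝ (Fin n) → ℝ)
    (ytil grad : ℕ → EuclideanSpace ℝ (Fin n))
    (hsc : ∀ t ∈ Finset.Icc 1 T, ∀ x,
      f t (ytil t) - f t x ≤ ⟪grad t, ytil t - x⟫ - (α / 2) * ‖ytil t - x‖ ^ 2)
    (hproj : ∀ t ∈ Finset.Icc 1 T, ∀ z ∈ K,
      ‖ytil (t + 1) - z‖ ^ 2 ≤ ‖(ytil t - (1 / (α * t)) • grad t) - z‖ ^ 2) :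
    ∀ x ∈ K,
      ∑ t ∈ Finset.Icc 1 T, (f t (ytil t) - f t x) ≤
        ∑ t ∈ Finset.Icc 1 T, ‖grad t‖ ^ 2 / (2 * α * t) :=
  stmt12_general K T α hα f ytil grad hsc hproj
end

section
/- Let K ⊂ R^n be convex and compact with 0 ∈ K ⊆ RB and rB ⊆ K for r > 0. Fix δ ∈ (0,1), δ' ∈ [0,r). Consider the iterative procedure: y_1 is the Euclidean projection of y_0 onto RB; at step i, if y_i/(1-δ'/r) ∉ K, take a separating hyperplane g_i (so that (y_i/(1-δ'/r) - x)ᵀ g_i > 0 for all x ∈ K) and set y_{i+1} = y_i - (δ(r-δ')/‖g_i‖) g_i; otherwise stop and output y = y_i. Then the procedure stops after at most (dist²(y_0, K_{δ,δ'/r}) - dist²(y, K_{δ,δ'/r}))/(δ²(r-δ')²) + 1 iterations, the output y lies in (1-δ'/r)K, and for all z ∈ K_{δ,δ'/r} = (1-δ)(1-δ'/r)K, ‖y - z‖² ≤ ‖y_0 - z‖². -/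
/-!
Write `ρ = 1 - δ'/r`. Since `rB ⊆ K`, a cut `g` separating `ρ⁻¹ y` from `K` satisfies
`⟪y - z, g⟫ ≥ δ ρ r ‖g‖` for every `z ∈ (1 - δ) ρ K`, so the step of length
`δ ρ r = δ (r - δ')` along `-g` decreases `‖y - z‖²` by at least `(δ ρ r)²`. The radial
projection onto `RB` does not increase these distances either, so after `k` steps
`‖y_k - z‖² + k (δ ρ r)² ≤ ‖y₀ - z‖²`; taking infima over `z` gives the iteration bound.
-/

open Metric Set
open scoped Pointwise
open scoped RealInnerProductSpace

section InnerProductSpace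

variable {E : Type*} [NormedAddCommGroup E] [InnerProductSpace ℝ E]

lemma norm_smul_sub_le_norm_sub {y z : E} {t : ℝ} (ht0 : 0 ≤ t) (ht1 : t ≤ 1)
    (hz : ‖z‖ ≤ t * ‖y‖) : ‖t • y - z‖ ≤ ‖y - z‖ := by
  have hyz : ⟪y, z⟫ ≤ t * ‖y‖ ^ 2 := calc
    ⟪y, z⟫ ≤ ‖y‖ * ‖z‖ := real_inner_le_norm y z
    _ ≤ ‖y‖ * (t * ‖y‖) := mul_le_mul_of_nonneg_left hz (norm_nonneg y)
    _ = t * ‖y‖ ^ 2 := by ring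
  rw [← pow_le_pow_iff_left₀ (norm_nonneg _) (norm_nonneg _) two_ne_zero, norm_sub_sq_real,
    norm_sub_sq_real, norm_smul, real_inner_smul_left, Real.norm_of_nonneg ht0]
  -- `‖y - z‖² - ‖t y - z‖² = (1 - t) ((1 + t) ‖y‖² - 2 ⟪y, z⟫) ≥ (1 - t)² ‖y‖²`
  nlinarith [mul_nonneg (sub_nonneg.2 ht1) (sub_nonneg.2 hyz), sq_nonneg ((1 - t) * ‖y‖)]

lemma norm_inv_max_div_smul_sub_le (y : E) {z : E} {R : ℝ} (hz : ‖z‖ ≤ R) :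
    ‖(max 1 (‖y‖ / R))⁻¹ • y - z‖ ≤ ‖y - z‖ := by
  rcases le_or_gt (‖y‖ / R) 1 with h | h
  · rw [max_eq_left h, inv_one, one_smul]
  · have hR : 0 < R := lt_of_not_ge fun hR =>
      h.not_ge ((div_nonpos_of_nonneg_of_nonpos (norm_nonneg y) hR).trans zero_le_one)
    have hy : ‖y‖ ≠ 0 := ((one_lt_div hR).1 h).trans' hR |>.ne'
    rw [max_eq_right h.le]
    refine norm_smul_sub_le_norm_sub (by positivity) (inv_le_one_of_one_le₀ h.le) ?_
    rwa [inv_div, div_mul_cancel₀ _ hy]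

lemma mul_norm_lt_inner_of_closedBall_subset {K : Set E} {r : ℝ} (hr : 0 ≤ r)
    (hrK : closedBall 0 r ⊆ K) {w g : E} (hsep : ∀ x ∈ K, 0 < ⟪w - x, g⟫) :
    r * ‖g‖ < ⟪w, g⟫ := by
  rcases eq_or_ne g 0 with rfl | hg
  · simpa using hsep 0 (hrK (mem_closedBall_self hr))
  have hg' : 0 < ‖g‖ := norm_pos_iff.2 hg
  have hx : (r / ‖g‖) • g ∈ K := hrK <| by
    rw [mem_closedBall_zero_iff, norm_smul, Real.norm_of_nonneg (by positivity),
      div_mul_cancel₀ _ hg'.ne']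
  have := hsep _ hx
  rw [inner_sub_left, real_inner_smul_left, real_inner_self_eq_norm_sq] at this
  field_simp at this
  linarith

lemma mul_norm_le_inner_sub_smul_of_closedBall_subset {K : Set E} {r : ℝ} (hr : 0 ≤ r)
    (hrK : closedBall 0 r ⊆ K) {w g : E} (hsep : ∀ x ∈ K, 0 < ⟪w - x, g⟫) {δ ρ : ℝ}
    (hδ0 : 0 ≤ δ) (hδ1 : δ ≤ 1) (hρ : 0 ≤ ρ) {x : E} (hx : x ∈ K) :
    δ * ρ * r * ‖g‖ ≤ ⟪ρ • w - ((1 - δ) * ρ) • x, g⟫ := by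
  have hw := mul_norm_lt_inner_of_closedBall_subset hr hrK hsep
  have hwx := hsep x hx
  -- `⟪ρ w - (1 - δ) ρ x, g⟫ = ρ (δ ⟪w, g⟫ + (1 - δ) ⟪w - x, g⟫)`
  rw [inner_sub_left] at hwx
  rw [inner_sub_left, real_inner_smul_left, real_inner_smul_left]
  nlinarith [mul_nonneg hρ (mul_nonneg hδ0 (sub_nonneg.2 hw.le)),
    mul_nonneg hρ (mul_nonneg (sub_nonneg.2 hδ1) hwx.le)]

lemma norm_sub_div_norm_smul_sub_sq_le {y z g : E} (hg : g ≠ 0) {c : ℝ} (hc : 0 ≤ c)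
    (h : c * ‖g‖ ≤ ⟪y - z, g⟫) :
    ‖y - (c / ‖g‖) • g - z‖ ^ 2 ≤ ‖y - z‖ ^ 2 - c ^ 2 := by
  have hg' : 0 < ‖g‖ := norm_pos_iff.2 hg
  rw [sub_right_comm, norm_sub_sq_real, real_inner_smul_right, norm_smul,
    Real.norm_of_nonneg (by positivity), div_mul_cancel₀ _ hg'.ne']
  have : c ^ 2 ≤ c / ‖g‖ * ⟪y - z, g⟫ := by
    calc c ^ 2 = c / ‖g‖ * (c * ‖g‖) := by field_simp
      _ ≤ c / ‖g‖ * ⟪y - z, g⟫ := mul_le_mul_of_nonneg_left h (by positivity)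
  linarith

lemma norm_sub_div_norm_smul_sub_sq_le_of_separates {K : Set E} {r : ℝ} (hr : 0 ≤ r)
    (hrK : closedBall 0 r ⊆ K) {y g : E} {ρ : ℝ} (hρ : 0 < ρ)
    (hsep : ∀ x ∈ K, 0 < ⟪ρ⁻¹ • y - x, g⟫) {δ : ℝ} (hδ0 : 0 ≤ δ) (hδ1 : δ ≤ 1)
    {x : E} (hx : x ∈ K) :
    ‖y - (δ * ρ * r / ‖g‖) • g - ((1 - δ) * ρ) • x‖ ^ 2 ≤
      ‖y - ((1 - δ) * ρ) • x‖ ^ 2 - (δ * ρ * r) ^ 2 := by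
  have hg : g ≠ 0 := by
    rintro rfl
    simpa using hsep x hx
  refine norm_sub_div_norm_smul_sub_sq_le hg (by positivity) ?_
  simpa only [smul_inv_smul₀ hρ.ne'] using
    mul_norm_le_inner_sub_smul_of_closedBall_subset hr hrK hsep hδ0 hδ1 hρ.le hx

end InnerProductSpace

lemma sq_infDist_add_le_sq_infDist {α : Type*} [PseudoMetricSpace α] {x y : α} {S : Set α}
    (hS : S.Nonempty) {a : ℝ} (h : ∀ z ∈ S, dist y z ^ 2 + a ≤ dist x z ^ 2) :
    infDist y S ^ 2 + a ≤ infDist x S ^ 2 := by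
  have : √(infDist y S ^ 2 + a) ≤ infDist x S := (le_infDist hS).2 fun z hz =>
    (Real.sqrt_le_left dist_nonneg).2 <| (h z hz).trans' <| by
      gcongr
      exacts [infDist_nonneg, infDist_le_dist_of_mem hz]
  exact (Real.sqrt_le_left infDist_nonneg).1 this

lemma add_nat_mul_le_of_forall_lt_le_sub {a : ℕ → ℝ} {c : ℝ} {k : ℕ}
    (h : ∀ i < k, a (i + 1) ≤ a i - c) : a k + k * c ≤ a 0 := by
  induction k with
  | zero => simp
  | succ k ih =>
    have := h k k.lt_succ_self
    have := ih fun i hi => h i (hi.trans k.lt_succ_self)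
    push_cast
    linarith

theorem stmt13_general {n : ℕ} (K : Set (EuclideanSpace ℝ (Fin n)))
    (h0 : (0 : EuclideanSpace ℝ (Fin n)) ∈ K)
    (r R : ℝ) (hr : 0 < r)
    (hrK : closedBall (0 : EuclideanSpace ℝ (Fin n)) r ⊆ K)
    (hKR : K ⊆ closedBall (0 : EuclideanSpace ℝ (Fin n)) R)
    (δ δ' : ℝ) (hδ : δ ∈ Set.Ioo (0 : ℝ) 1) (hδ' : δ' ∈ Set.Ico (0 : ℝ) r)
    (y0 : EuclideanSpace ℝ (Fin n))
    (y g : ℕ → EuclideanSpace ℝ (Fin n))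
    (hy1 : y 0 = (max 1 (‖y0‖ / R))⁻¹ • y0)
    (k : ℕ)
    (hstep : ∀ i < k, (1 - δ' / r)⁻¹ • y i ∉ K ∧
      (∀ x ∈ K, 0 < ⟪(1 - δ' / r)⁻¹ • y i - x, g i⟫) ∧
      y (i + 1) = y i - (δ * (r - δ') / ‖g i‖) • g i)
    (hstop : (1 - δ' / r)⁻¹ • y k ∈ K) :
    (k : ℝ) ≤
      ((Metric.infDist y0 (((1 - δ) * (1 - δ' / r)) • K)) ^ 2 -
        (Metric.infDist (y k) (((1 - δ) * (1 - δ' / r)) • K)) ^ 2) /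
          (δ ^ 2 * (r - δ') ^ 2) + 1 ∧
    y k ∈ (1 - δ' / r) • K ∧
    ∀ z ∈ ((1 - δ) * (1 - δ' / r)) • K, ‖y k - z‖ ^ 2 ≤ ‖y0 - z‖ ^ 2 := by
  obtain ⟨hδ0, hδ1⟩ := hδ
  obtain ⟨hδ'0, hδ'r⟩ := hδ'
  set ρ := 1 - δ' / r with hρ
  have hρ0 : 0 < ρ := sub_pos.2 ((div_lt_one hr).2 hδ'r)
  have hρ1 : ρ ≤ 1 := sub_le_self _ (div_nonneg hδ'0 hr.le)
  have hc : δ * (r - δ') = δ * ρ * r := by rw [hρ]; field_simp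
  have hdist : ∀ z ∈ ((1 - δ) * ρ) • K, ‖y k - z‖ ^ 2 + k * (δ * ρ * r) ^ 2 ≤ ‖y0 - z‖ ^ 2 := by
    rintro _ ⟨x, hx, rfl⟩
    have hsteps := add_nat_mul_le_of_forall_lt_le_sub (k := k)
      (a := fun i => ‖y i - ((1 - δ) * ρ) • x‖ ^ 2) fun i hi => by
        obtain ⟨-, hsep, hy⟩ := hstep i hi
        simpa only [hy, hc] using
          norm_sub_div_norm_smul_sub_sq_le_of_separates hr.le hrK hρ0 hsep hδ0.le hδ1.le hx
    have hproj : ‖y 0 - ((1 - δ) * ρ) • x‖ ≤ ‖y0 - ((1 - δ) * ρ) • x‖ := by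
      refine hy1 ▸ norm_inv_max_div_smul_sub_le y0 ?_
      rw [norm_smul, Real.norm_of_nonneg (mul_nonneg (sub_nonneg.2 hδ1.le) hρ0.le)]
      exact (mul_le_of_le_one_left (norm_nonneg x)
        (mul_le_one₀ (sub_le_self _ hδ0.le) hρ0.le hρ1)).trans
        (mem_closedBall_zero_iff.1 (hKR hx))
    have := pow_le_pow_left₀ (norm_nonneg _) hproj 2
    linarith
  have hk : 0 ≤ (k : ℝ) * (δ * ρ * r) ^ 2 := by positivity
  refine ⟨?_, ⟨ρ⁻¹ • y k, hstop, smul_inv_smul₀ hρ0.ne' _⟩, fun z hz => by linarith [hdist z hz]⟩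
  have hinf := sq_infDist_add_le_sq_infDist (S := ((1 - δ) * ρ) • K) ⟨0, 0, h0, smul_zero _⟩
    fun z hz => by simpa only [dist_eq_norm] using hdist z hz
  have hc2 : δ ^ 2 * (r - δ') ^ 2 = (δ * ρ * r) ^ 2 := by rw [← hc]; ring
  rw [hc2]
  exact le_add_of_le_of_nonneg ((le_div_iff₀ (by positivity)).2 (by linarith)) zero_le_one

theorem stmt13 {n : ℕ} (K : Set (EuclideanSpace ℝ (Fin n))) (hK : Convex ℝ K)
    (hKc : IsCompact K) (h0 : (0 : EuclideanSpace ℝ (Fin n)) ∈ K)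
    (r R : ℝ) (hr : 0 < r)
    (hrK : closedBall (0 : EuclideanSpace ℝ (Fin n)) r ⊆ K)
    (hKR : K ⊆ closedBall (0 : EuclideanSpace ℝ (Fin n)) R)
    (δ δ' : ℝ) (hδ : δ ∈ Set.Ioo (0 : ℝ) 1) (hδ' : δ' ∈ Set.Ico (0 : ℝ) r)
    (y0 : EuclideanSpace ℝ (Fin n))
    (y g : ℕ → EuclideanSpace ℝ (Fin n))
    (hy1 : y 0 = (max 1 (‖y0‖ / R))⁻¹ • y0)
    (k : ℕ)
    (hstep : ∀ i < k, (1 - δ' / r)⁻¹ • y i ∉ K ∧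
      (∀ x ∈ K, 0 < ⟪(1 - δ' / r)⁻¹ • y i - x, g i⟫) ∧
      y (i + 1) = y i - (δ * (r - δ') / ‖g i‖) • g i)
    (hstop : (1 - δ' / r)⁻¹ • y k ∈ K) :
    (k : ℝ) ≤
      ((Metric.infDist y0 (((1 - δ) * (1 - δ' / r)) • K)) ^ 2 -
        (Metric.infDist (y k) (((1 - δ) * (1 - δ' / r)) • K)) ^ 2) /
          (δ ^ 2 * (r - δ') ^ 2) + 1 ∧
    y k ∈ (1 - δ' / r) • K ∧
    ∀ z ∈ ((1 - δ) * (1 - δ' / r)) • K, ‖y k - z‖ ^ 2 ≤ ‖y0 - z‖ ^ 2 :=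
  stmt13_general K h0 r R hr hrK hKR δ δ' hδ hδ' y0 y g hy1 k hstep hstop
end

section
/- Let f : R^n → R be convex and β-smooth over a convex compact set K ⊂ R^n of Euclidean diameter 2R, and let x* ∈ argmin_{x∈K} f(x). Then the Frank-Wolfe algorithm with exact line search (v_i ∈ argmin_{x∈K} ∇f(x_i)ᵀx, σ_i = argmin_{σ∈[0,1]} f(x_i + σ(v_i - x_i)), x_{i+1} = x_i + σ_i(v_i - x_i)) guarantees f(x_i) - f(x*) ≤ 2β(2R)²/(i+2) for all i ≥ 1. -/
/-!
Let `hᵢ = f xᵢ - f x*`. Exact line search makes `x_{i+1}` at least as good as the point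
`xᵢ + s (vᵢ - xᵢ)` for every `s ∈ [0, 1]`. The descent lemma bounds `f` there by
`f xᵢ + s ⟪∇f xᵢ, vᵢ - xᵢ⟫ + β/2 s² (2R)²`, and since `vᵢ` minimises the linear model while
convexity gives `⟪∇f xᵢ, x* - xᵢ⟫ ≤ -hᵢ`, we get `h_{i+1} ≤ (1 - s) hᵢ + β/2 s² (2R)²`.
Taking `s = 1` gives the bound for `i = 1`, and `s = 2/(i+2)` propagates it by induction.
-/

open Set AffineMap
open scoped RealInnerProductSpace

section Gradient

variable {E : Type*} [NormedAddCommGroup E] [InnerProductSpace ℝ E] [CompleteSpace E]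
  {f : E → ℝ} {K : Set E}

theorem HasGradientAt.hasDerivAt_comp_lineMap {g a b : E} {t : ℝ}
    (hf : HasGradientAt f g (lineMap a b t)) :
    HasDerivAt (fun s : ℝ => f (lineMap a b s)) ⟪g, b - a⟫ t := by
  simpa [Function.comp_def, InnerProductSpace.toDual_apply_apply] using
    hf.hasFDerivAt.comp_hasDerivAt t hasDerivAt_lineMap

theorem ConvexOn.inner_gradient_le_sub (hconv : ConvexOn ℝ K f) {g a b : E}
    (hf : HasGradientAt f g a) (ha : a ∈ K) (hb : b ∈ K) :
    ⟪g, b - a⟫ ≤ f b - f a := by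
  have hline : ConvexOn ℝ (Icc 0 1) (fun s : ℝ => f (lineMap a b s)) :=
    (hconv.comp_affineMap (lineMap a b)).subset (fun _ hs => hconv.1.lineMap_mem ha hb hs)
      (convex_Icc 0 1)
  have hderiv : HasDerivAt (fun s : ℝ => f (lineMap a b s)) ⟪g, b - a⟫ 0 :=
    HasGradientAt.hasDerivAt_comp_lineMap (by rwa [lineMap_apply_zero])
  simpa [slope_def_field] using
    hline.le_slope_of_hasDerivAt (left_mem_Icc.2 zero_le_one) (right_mem_Icc.2 zero_le_one)
      zero_lt_one hderiv

variable {f' : E → E} {β : ℝ}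

theorem le_add_inner_gradient_add_sq_of_lipschitz (hK : Convex ℝ K)
    (hf : ∀ x ∈ K, HasGradientAt f (f' x) x)
    (hsmooth : ∀ x ∈ K, ∀ y ∈ K, ‖f' x - f' y‖ ≤ β * ‖x - y‖) {a b : E}
    (ha : a ∈ K) (hb : b ∈ K) :
    f b ≤ f a + ⟪f' a, b - a⟫ + β / 2 * ‖b - a‖ ^ 2 := by
  have hmem : ∀ t ∈ Icc (0 : ℝ) 1, lineMap a b t ∈ K := fun _ ht => hK.lineMap_mem ha hb ht
  -- the gap to the quadratic model along the segment is antitone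
  have hderiv : ∀ t ∈ Icc (0 : ℝ) 1, HasDerivAt
      (fun s : ℝ => f (lineMap a b s) - s * ⟪f' a, b - a⟫ - β / 2 * s ^ 2 * ‖b - a‖ ^ 2)
      (⟪f' (lineMap a b t), b - a⟫ - ⟪f' a, b - a⟫ - β * t * ‖b - a‖ ^ 2) t := by
    intro t ht
    refine ((((hf _ (hmem t ht)).hasDerivAt_comp_lineMap).sub
      ((hasDerivAt_id' t).mul_const ⟪f' a, b - a⟫)).sub
      (((hasDerivAt_pow 2 t).const_mul (β / 2)).mul_const (‖b - a‖ ^ 2))).congr_deriv ?_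
    push_cast
    ring
  have hanti := antitoneOn_of_hasDerivWithinAt_nonpos (convex_Icc 0 1)
    (fun t ht => (hderiv t ht).continuousAt.continuousWithinAt)
    (fun t ht => (hderiv t (interior_subset ht)).hasDerivWithinAt)
    (fun t ht => by
      have ht' := interior_subset ht
      calc ⟪f' (lineMap a b t), b - a⟫ - ⟪f' a, b - a⟫ - β * t * ‖b - a‖ ^ 2
          = ⟪f' (lineMap a b t) - f' a, b - a⟫ - β * t * ‖b - a‖ ^ 2 := by
            rw [inner_sub_left]
        _ ≤ ‖f' (lineMap a b t) - f' a‖ * ‖b - a‖ - β * t * ‖b - a‖ ^ 2 := by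
            gcongr; exact real_inner_le_norm _ _
        _ ≤ β * ‖lineMap a b t - a‖ * ‖b - a‖ - β * t * ‖b - a‖ ^ 2 := by
            gcongr; exact hsmooth _ (hmem t ht') a ha
        _ = 0 := by
            rw [← dist_eq_norm, dist_lineMap_left, dist_eq_norm', Real.norm_of_nonneg ht'.1]
            ring)
  have := hanti (left_mem_Icc.2 zero_le_one) (right_mem_Icc.2 zero_le_one) zero_le_one
  simp only [lineMap_apply_zero, lineMap_apply_one] at this
  linarith

theorem frankWolfe_step_le (hK : Convex ℝ K) (hf : ∀ x ∈ K, HasGradientAt f (f' x) x)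
    (hconv : ConvexOn ℝ K f) (hsmooth : ∀ x ∈ K, ∀ y ∈ K, ‖f' x - f' y‖ ≤ β * ‖x - y‖)
    {x v xstar : E} (hx : x ∈ K) (hv : v ∈ K) (hxstar : xstar ∈ K)
    (hvmin : ⟪f' x, v⟫ ≤ ⟪f' x, xstar⟫) {s : ℝ} (hs : s ∈ Icc (0 : ℝ) 1) :
    f (x + s • (v - x)) - f xstar ≤ (1 - s) * (f x - f xstar) + β / 2 * s ^ 2 * ‖v - x‖ ^ 2 := by
  have hxs : x + s • (v - x) ∈ K := by
    simpa [lineMap_apply_module', add_comm] using hK.lineMap_mem hx hv hs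
  have hdescent := le_add_inner_gradient_add_sq_of_lipschitz hK hf hsmooth hx hxs
  have hgap : ⟪f' x, v - x⟫ ≤ f xstar - f x := by
    have := hconv.inner_gradient_le_sub (hf x hx) hx hxstar
    rw [inner_sub_right] at this ⊢
    linarith
  rw [add_sub_cancel_left, inner_smul_right, norm_smul, mul_pow, Real.norm_eq_abs, sq_abs]
    at hdescent
  nlinarith [mul_le_mul_of_nonneg_left hgap hs.1]

end Gradient

theorem le_two_mul_div_add_two_of_le_one_sub_mul_add_sq {h : ℕ → ℝ} {B : ℝ} (hB : 0 ≤ B)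
    (hstep : ∀ i, ∀ s ∈ Icc (0 : ℝ) 1, h (i + 1) ≤ (1 - s) * h i + B / 2 * s ^ 2) :
    ∀ i : ℕ, 1 ≤ i → h i ≤ 2 * B / (i + 2) := by
  intro i hi
  induction i, hi using Nat.le_induction with
  | base =>
    have := hstep 0 1 ⟨zero_le_one, le_rfl⟩
    norm_num at this ⊢
    linarith
  | succ i hi ih =>
    set t : ℝ := i + 2 with ht
    have ht2 : 2 ≤ t := by simp [ht]
    have hs : 2 / t ∈ Icc (0 : ℝ) 1 := ⟨by positivity, (div_le_one (by linarith)).2 ht2⟩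
    calc h (i + 1) ≤ (1 - 2 / t) * h i + B / 2 * (2 / t) ^ 2 := hstep i _ hs
      _ ≤ (1 - 2 / t) * (2 * B / t) + B / 2 * (2 / t) ^ 2 := by
          gcongr
          exact sub_nonneg.2 hs.2
      _ = 2 * B * (t - 1) / t ^ 2 := by field_simp; ring
      _ ≤ 2 * B / (t + 1) := by
          rw [div_le_div_iff₀ (by positivity) (by linarith)]
          nlinarith
      _ = 2 * B / ((i + 1 : ℕ) + 2) := by push_cast; ring

theorem stmt14_general {n : ℕ} (K : Set (EuclideanSpace ℝ (Fin n))) (hK : Convex ℝ K)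
    (R β : ℝ) (hβ : 0 < β)
    (hdiam : ∀ x ∈ K, ∀ y ∈ K, ‖x - y‖ ≤ 2 * R)
    (f : EuclideanSpace ℝ (Fin n) → ℝ)
    (f' : EuclideanSpace ℝ (Fin n) → EuclideanSpace ℝ (Fin n))
    (hf : ∀ x, HasGradientAt f (f' x) x)
    (hconv : ConvexOn ℝ K f)
    (hsmooth : ∀ x ∈ K, ∀ y ∈ K, ‖f' x - f' y‖ ≤ β * ‖x - y‖)
    (xstar : EuclideanSpace ℝ (Fin n)) (hxstar : xstar ∈ K)
    (x v : ℕ → EuclideanSpace ℝ (Fin n)) (σ : ℕ → ℝ)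
    (hx0 : x 0 ∈ K)
    (hv : ∀ i, v i ∈ K ∧ ∀ z ∈ K, ⟪f' (x i), v i⟫ ≤ ⟪f' (x i), z⟫)
    (hσ : ∀ i, σ i ∈ Set.Icc (0 : ℝ) 1 ∧
      ∀ s ∈ Set.Icc (0 : ℝ) 1,
        f (x i + σ i • (v i - x i)) ≤ f (x i + s • (v i - x i)))
    (hupd : ∀ i, x (i + 1) = x i + σ i • (v i - x i)) :
    ∀ i : ℕ, 1 ≤ i → f (x i) - f xstar ≤ 2 * β * (2 * R) ^ 2 / (i + 2) := by
  have hxK : ∀ i, x i ∈ K := by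
    intro i
    induction i with
    | zero => exact hx0
    | succ i ih =>
      simpa [hupd, lineMap_apply_module', add_comm] using hK.lineMap_mem ih (hv i).1 (hσ i).1
  have hR : 0 ≤ 2 * R := (norm_nonneg _).trans (hdiam xstar hxstar xstar hxstar)
  simp_rw [mul_assoc 2 β]
  refine le_two_mul_div_add_two_of_le_one_sub_mul_add_sq (h := fun i => f (x i) - f xstar)
    (by positivity) fun i s hs => ?_
  calc f (x (i + 1)) - f xstar ≤ f (x i + s • (v i - x i)) - f xstar := by
        rw [hupd]; linarith [(hσ i).2 s hs]
    _ ≤ (1 - s) * (f (x i) - f xstar) + β / 2 * s ^ 2 * ‖v i - x i‖ ^ 2 :=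
        frankWolfe_step_le hK (fun y _ => hf y) hconv hsmooth (hxK i) (hv i).1 hxstar
          ((hv i).2 xstar hxstar) hs
    _ ≤ (1 - s) * (f (x i) - f xstar) + β * (2 * R) ^ 2 / 2 * s ^ 2 := by
        have hvx : ‖v i - x i‖ ^ 2 ≤ (2 * R) ^ 2 := by gcongr; exact hdiam _ (hv i).1 _ (hxK i)
        nlinarith [mul_le_mul_of_nonneg_left hvx (by positivity : 0 ≤ β / 2 * s ^ 2)]

theorem stmt14 {n : ℕ} (K : Set (EuclideanSpace ℝ (Fin n))) (hK : Convex ℝ K)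
    (hKc : IsCompact K) (R β : ℝ) (hβ : 0 < β)
    (hdiam : ∀ x ∈ K, ∀ y ∈ K, ‖x - y‖ ≤ 2 * R)
    (f : EuclideanSpace ℝ (Fin n) → ℝ)
    (f' : EuclideanSpace ℝ (Fin n) → EuclideanSpace ℝ (Fin n))
    (hf : ∀ x, HasGradientAt f (f' x) x)
    (hconv : ConvexOn ℝ K f)
    (hsmooth : ∀ x ∈ K, ∀ y ∈ K, ‖f' x - f' y‖ ≤ β * ‖x - y‖)
    (xstar : EuclideanSpace ℝ (Fin n)) (hxstar : xstar ∈ K)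
    (hmin : ∀ z ∈ K, f xstar ≤ f z)
    (x v : ℕ → EuclideanSpace ℝ (Fin n)) (σ : ℕ → ℝ)
    (hx0 : x 0 ∈ K)
    (hv : ∀ i, v i ∈ K ∧ ∀ z ∈ K, ⟪f' (x i), v i⟫ ≤ ⟪f' (x i), z⟫)
    (hσ : ∀ i, σ i ∈ Set.Icc (0 : ℝ) 1 ∧
      ∀ s ∈ Set.Icc (0 : ℝ) 1,
        f (x i + σ i • (v i - x i)) ≤ f (x i + s • (v i - x i)))
    (hupd : ∀ i, x (i + 1) = x i + σ i • (v i - x i)) :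
    ∀ i : ℕ, 1 ≤ i → f (x i) - f xstar ≤ 2 * β * (2 * R) ^ 2 / (i + 2) :=
  stmt14_general K hK R β hβ hdiam f f' hf hconv hsmooth xstar hxstar x v σ hx0 hv hσ hupd
end

section
/- Let K ⊂ R^n be convex with 0 ∈ K and K ⊆ RB, and consider the procedure that, given x_0 ∈ K and y_0, sets y_1 = y_0 / max{1, ‖y_0‖/R} (projection onto RB), and iteratively, given y_i ∉ within distance √(3ε) of a returned point x_i ∈ K satisfying (y_i - z)ᵀ(y_i - x_i) ≥ 2ε for all z ∈ K and ‖y_i - x_i‖ ≤ ‖y_0 - x_0‖, updates y_{i+1} = y_i - γ(y_i - x_i) with γ = 2ε/‖x_0 - y_0‖². Then for every i, dist²(y_{i+1}, K) ≤ dist²(y_i, K) - 4ε²/‖x_0 - y_0‖². -/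
open Metric Set
open scoped RealInnerProductSpace

/-!
Every `z ∈ K` lies in the halfspace `⟪y_i - z, y_i - x_i⟫ ≥ 2ε`, and a step of length `γ` against
`y_i - x_i` brings `y_i` closer to each point of that halfspace by the same amount in squared
distance. Applying this to the point of `K` nearest to `y_i` bounds `dist(y_{i+1}, K)`.
-/

theorem norm_sub_smul_sub_sq_le {E : Type*} [NormedAddCommGroup E] [InnerProductSpace ℝ E]
    {y z g : E} {Q C : ℝ} (hQ : 0 ≤ Q) (hyz : Q ≤ ⟪y - z, g⟫) (hg : ‖g‖ ≤ C) :
    ‖y - (Q / C ^ 2) • g - z‖ ^ 2 ≤ ‖y - z‖ ^ 2 - Q ^ 2 / C ^ 2 := by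
  rcases eq_or_ne C 0 with rfl | hC
  · -- both divisions by `0 ^ 2` are `0`, so the step is trivial
    simp
  set γ := Q / C ^ 2
  have hγ : 0 ≤ γ := by positivity
  have hg2 : ‖g‖ ^ 2 ≤ C ^ 2 := pow_le_pow_left₀ (norm_nonneg g) hg 2
  calc ‖y - γ • g - z‖ ^ 2
      = ‖y - z‖ ^ 2 - 2 * γ * ⟪y - z, g⟫ + γ ^ 2 * ‖g‖ ^ 2 := by
        rw [sub_right_comm, norm_sub_sq_real, real_inner_smul_right, norm_smul,
          Real.norm_of_nonneg hγ]
        ring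
    _ ≤ ‖y - z‖ ^ 2 - 2 * γ * Q + γ ^ 2 * C ^ 2 := by gcongr
    _ = ‖y - z‖ ^ 2 - Q ^ 2 / C ^ 2 := by
        simp only [γ]
        field_simp
        ring

theorem infDist_sq_le_of_forall_dist_sq_le {α : Type*} [PseudoMetricSpace α] {K : Set α}
    (hK : IsCompact K) (hne : K.Nonempty) {a b : α} {c : ℝ}
    (h : ∀ z ∈ K, dist a z ^ 2 ≤ dist b z ^ 2 - c) :
    infDist a K ^ 2 ≤ infDist b K ^ 2 - c := by
  obtain ⟨z, hzK, hz⟩ := hK.exists_infDist_eq_dist hne b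
  calc infDist a K ^ 2 ≤ dist a z ^ 2 :=
        pow_le_pow_left₀ infDist_nonneg (infDist_le_dist_of_mem hzK) 2
    _ ≤ infDist b K ^ 2 - c := hz ▸ h z hzK

theorem stmt16_general {n : ℕ} (K : Set (EuclideanSpace ℝ (Fin n)))
    (hKc : IsCompact K) (hKne : K.Nonempty)
    (x0 y0 : EuclideanSpace ℝ (Fin n))
    (ε : ℝ) (hε : 0 < ε)
    (x y : ℕ → EuclideanSpace ℝ (Fin n))
    (hsep : ∀ i, ∀ z ∈ K, 2 * ε ≤ ⟪y i - z, y i - x i⟫)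
    (hclose : ∀ i, ‖y i - x i‖ ≤ ‖y0 - x0‖)
    (hupd : ∀ i, y (i + 1) = y i - (2 * ε / ‖x0 - y0‖ ^ 2) • (y i - x i)) :
    ∀ i, (Metric.infDist (y (i + 1)) K) ^ 2 ≤
      (Metric.infDist (y i) K) ^ 2 - 4 * ε ^ 2 / ‖x0 - y0‖ ^ 2 := by
  intro i
  apply infDist_sq_le_of_forall_dist_sq_le hKc hKne
  intro z hz
  have hstep := norm_sub_smul_sub_sq_le (by positivity) (hsep i z hz)
    ((hclose i).trans_eq (norm_sub_rev y0 x0))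
  rw [dist_eq_norm, dist_eq_norm, hupd i]
  convert hstep using 2
  ring

theorem stmt16 {n : ℕ} (K : Set (EuclideanSpace ℝ (Fin n))) (hK : Convex ℝ K)
    (hKc : IsCompact K) (hKne : K.Nonempty)
    (x0 y0 : EuclideanSpace ℝ (Fin n)) (hx0 : x0 ∈ K)
    (ε : ℝ) (hε : 0 < ε) (hfar : 3 * ε < ‖x0 - y0‖ ^ 2)
    (x y : ℕ → EuclideanSpace ℝ (Fin n))
    (hxK : ∀ i, x i ∈ K)
    (hsep : ∀ i, ∀ z ∈ K, 2 * ε ≤ ⟪y i - z, y i - x i⟫)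
    (hclose : ∀ i, ‖y i - x i‖ ≤ ‖y0 - x0‖)
    (hupd : ∀ i, y (i + 1) = y i - (2 * ε / ‖x0 - y0‖ ^ 2) • (y i - x i)) :
    ∀ i, (Metric.infDist (y (i + 1)) K) ^ 2 ≤
      (Metric.infDist (y i) K) ^ 2 - 4 * ε ^ 2 / ‖x0 - y0‖ ^ 2 :=
  stmt16_general K hKc hKne x0 y0 ε hε x y hsep hclose hupd
end
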